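/- arXiv:1711.00668 — 4 statements merged into one kernel-verified Lean document; each statement's English description precedes it below -/
import Mathlib

section
/- Let X and Y be real random variables with finite second moments. Then Cov(X,Y) = ∫∫ [P(X ≤ x, Y ≤ y) - P(X ≤ x)P(Y ≤ y)] dx dy (Hoeffding's covariance identity). -/
/-!
Let `(X', Y')` be an independent copy of `(X, Y)`, realised on `(Ω × Ω, P ⊗ P)`; then
`2 Cov(X, Y) = E[(X - X')(Y - Y')]`. Writing `a - b = ∫ (1{b ≤ x} - 1{a ≤ x}) dx` in both factors
turns the integrand into a double integral over `(x, y)`, and Fubini applies because the absolute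
kernel integrates to `|X - X'| |Y - Y'|`. After the swap, the expectation at a fixed `(x, y)` is
`2 Cov(1{X ≤ x}, 1{Y ≤ y}) = 2 (P(X ≤ x, Y ≤ y) - P(X ≤ x) P(Y ≤ y))`.
-/

open MeasureTheory Set ProbabilityTheory

namespace Hoeffding

noncomputable def step (a x : ℝ) : ℝ := if a ≤ x then 1 else 0

@[fun_prop]
lemma _root_.Measurable.step {α : Type*} [MeasurableSpace α] {f g : α → ℝ}
    (hf : Measurable f) (hg : Measurable g) : Measurable fun z => step (f z) (g z) :=
  Measurable.ite (measurableSet_le hf hg) measurable_const measurable_const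

lemma step_sub_step (a b x : ℝ) :
    step b x - step a x = (Ico b a).indicator 1 x - (Ico a b).indicator 1 x := by
  simp only [step, indicator, mem_Ico, Pi.one_apply]
  split_ifs <;> grind

lemma abs_step_sub_step (a b x : ℝ) :
    |step b x - step a x| = step (min a b) x - step (max a b) x := by
  simp only [step, min_le_iff, max_le_iff]
  split_ifs <;> grind

lemma integrable_indicator_one_Ico (a b : ℝ) : Integrable ((Ico a b).indicator (1 : ℝ → ℝ)) :=
  (integrableOn_const measure_Ico_lt_top.ne).integrable_indicator measurableSet_Ico

lemma integrable_step_sub_step (a b : ℝ) : Integrable fun x => step b x - step a x := by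
  simp_rw [step_sub_step]
  exact (integrable_indicator_one_Ico b a).sub (integrable_indicator_one_Ico a b)

lemma integral_step_sub_step (a b : ℝ) : ∫ x, (step b x - step a x) = a - b := by
  simp_rw [step_sub_step]
  rw [integral_sub (integrable_indicator_one_Ico b a) (integrable_indicator_one_Ico a b),
    integral_indicator_one measurableSet_Ico, integral_indicator_one measurableSet_Ico,
    Real.volume_real_Ico, Real.volume_real_Ico]
  rcases le_total a b with h | h <;> simp [h]

lemma integral_abs_step_sub_step (a b : ℝ) : ∫ x, |step b x - step a x| = |a - b| := by
  simp_rw [abs_step_sub_step, integral_step_sub_step, max_sub_min_eq_abs, abs_sub_comm]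

section Covariance

variable {Ω : Type*} [MeasurableSpace Ω] {P : Measure Ω}

lemma covariance_congr_ae {X X' Y Y' : Ω → ℝ} (hX : X =ᵐ[P] X') (hY : Y =ᵐ[P] Y') :
    cov[X, Y; P] = cov[X', Y'; P] := by
  unfold covariance
  rw [integral_congr_ae hX, integral_congr_ae hY]
  refine integral_congr_ae ?_
  filter_upwards [hX, hY] with ω hXω hYω
  rw [hXω, hYω]

variable [IsProbabilityMeasure P]

lemma integral_prod_sub_mul_sub {f g : Ω → ℝ} (hf : MemLp f 2 P) (hg : MemLp g 2 P) :
    ∫ p, (f p.1 - f p.2) * (g p.1 - g p.2) ∂(P.prod P) = 2 * cov[f, g; P] := by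
  have hfg : Integrable (fun ω => f ω * g ω) P := hf.integrable_mul hg
  have hf1 : Integrable f P := hf.integrable one_le_two
  have hg1 : Integrable g P := hg.integrable one_le_two
  have h11 : Integrable (fun p : Ω × Ω => f p.1 * g p.1) (P.prod P) := hfg.comp_fst P
  have h22 : Integrable (fun p : Ω × Ω => f p.2 * g p.2) (P.prod P) := hfg.comp_snd P
  have h12 : Integrable (fun p : Ω × Ω => f p.1 * g p.2) (P.prod P) := hf1.mul_prod hg1
  have h21 : Integrable (fun p : Ω × Ω => g p.1 * f p.2) (P.prod P) := hg1.mul_prod hf1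
  have expand : (fun p : Ω × Ω => (f p.1 - f p.2) * (g p.1 - g p.2))
      = fun p => (f p.1 * g p.1 + f p.2 * g p.2) - (f p.1 * g p.2 + g p.1 * f p.2) := by
    ext; ring
  rw [expand, integral_sub (h11.fun_add h22) (h12.fun_add h21), integral_add h11 h22,
    integral_add h12 h21, integral_fun_fst (fun ω => f ω * g ω),
    integral_fun_snd (fun ω => f ω * g ω), integral_prod_mul f g, integral_prod_mul g f,
    covariance_eq_sub hf hg]
  simp only [probReal_univ, smul_eq_mul, one_mul, Pi.mul_apply]
  ring

lemma memLp_indicator_one {A : Set Ω} (hA : MeasurableSet A) {p : ENNReal} :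
    MemLp (A.indicator (1 : Ω → ℝ)) p P :=
  memLp_indicator_const p hA 1 (Or.inr (measure_ne_top P A))

lemma covariance_indicator_one {A B : Set Ω} (hA : MeasurableSet A) (hB : MeasurableSet B) :
    cov[A.indicator 1, B.indicator 1; P] = P.real (A ∩ B) - P.real A * P.real B := by
  rw [covariance_eq_sub (memLp_indicator_one hA) (memLp_indicator_one hB), ← inter_indicator_one,
    integral_indicator_one (hA.inter hB), integral_indicator_one hA, integral_indicator_one hB]

end Covariance

section Kernel

variable {Ω : Type*} {X Y : Ω → ℝ}

noncomputable def hoeffdingKernel (X Y : Ω → ℝ) (p : Ω × Ω) (q : ℝ × ℝ) : ℝ :=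
  (step (X p.2) q.1 - step (X p.1) q.1) * (step (Y p.2) q.2 - step (Y p.1) q.2)

lemma integral_hoeffdingKernel_right (X Y : Ω → ℝ) (p : Ω × Ω) :
    ∫ q, hoeffdingKernel X Y p q ∂(volume.prod volume) = (X p.1 - X p.2) * (Y p.1 - Y p.2) := by
  rw [← integral_step_sub_step (X p.1) (X p.2), ← integral_step_sub_step (Y p.1) (Y p.2)]
  exact integral_prod_mul (fun x => step (X p.2) x - step (X p.1) x)
    (fun y => step (Y p.2) y - step (Y p.1) y)

variable [MeasurableSpace Ω] {P : Measure Ω}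

noncomputable def cdfCov (P : Measure Ω) (X Y : Ω → ℝ) (x y : ℝ) : ℝ :=
  P.real {ω | X ω ≤ x ∧ Y ω ≤ y} - P.real {ω | X ω ≤ x} * P.real {ω | Y ω ≤ y}

lemma cdfCov_congr_ae {X' Y' : Ω → ℝ} (hX : X =ᵐ[P] X') (hY : Y =ᵐ[P] Y') :
    cdfCov P X Y = cdfCov P X' Y' := by
  have hset (s : ℝ → ℝ → Prop) :
      P.real {ω | s (X ω) (Y ω)} = P.real {ω | s (X' ω) (Y' ω)} := by
    refine measureReal_congr ?_
    filter_upwards [hX, hY] with ω hXω hYω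
    change s (X ω) (Y ω) = s (X' ω) (Y' ω)
    rw [hXω, hYω]
  ext x y
  rw [cdfCov, cdfCov, hset fun a b => a ≤ x ∧ b ≤ y, hset fun a _ => a ≤ x, hset fun _ b => b ≤ y]

variable [IsProbabilityMeasure P]

lemma integral_hoeffdingKernel_left (hX : Measurable X) (hY : Measurable Y) (q : ℝ × ℝ) :
    ∫ p, hoeffdingKernel X Y p q ∂(P.prod P) = 2 * cdfCov P X Y q.1 q.2 := by
  set A := {ω | X ω ≤ q.1}
  set B := {ω | Y ω ≤ q.2}
  have hA : MeasurableSet A := measurableSet_le hX measurable_const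
  have hB : MeasurableSet B := measurableSet_le hY measurable_const
  have hK : ∀ p, hoeffdingKernel X Y p q
      = (A.indicator 1 p.1 - A.indicator 1 p.2) * (B.indicator 1 p.1 - B.indicator 1 p.2) := by
    intro p
    simp only [hoeffdingKernel, step, indicator, A, B, mem_ofPred_eq, Pi.one_apply]
    ring
  simp_rw [hK]
  rw [integral_prod_sub_mul_sub (memLp_indicator_one hA) (memLp_indicator_one hB),
    covariance_indicator_one hA hB]
  rfl

lemma integrable_hoeffdingKernel (hXm : Measurable X) (hYm : Measurable Y)
    (hX : MemLp X 2 P) (hY : MemLp Y 2 P) :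
    Integrable (Function.uncurry (hoeffdingKernel X Y)) ((P.prod P).prod (volume.prod volume)) := by
  have hmeas : Measurable (Function.uncurry (hoeffdingKernel X Y)) := by
    unfold Function.uncurry hoeffdingKernel
    fun_prop
  refine (integrable_prod_iff hmeas.aestronglyMeasurable).2 ⟨ae_of_all _ fun p => ?_, ?_⟩
  · simp only [Function.uncurry_apply_pair, hoeffdingKernel]
    exact (integrable_step_sub_step _ _).mul_prod (integrable_step_sub_step _ _)
  · have hnorm : ∀ p : Ω × Ω, ∫ q, ‖hoeffdingKernel X Y p q‖ ∂(volume.prod volume)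
        = ‖(X p.1 - X p.2) * (Y p.1 - Y p.2)‖ := by
      intro p
      simp only [hoeffdingKernel, norm_mul, Real.norm_eq_abs]
      rw [integral_prod_mul (fun x => |step (X p.2) x - step (X p.1) x|)
        (fun y => |step (Y p.2) y - step (Y p.1) y|), integral_abs_step_sub_step,
        integral_abs_step_sub_step]
    simp_rw [Function.uncurry_apply_pair, hnorm]
    exact (((hX.comp_fst P).sub (hX.comp_snd P)).integrable_mul
      ((hY.comp_fst P).sub (hY.comp_snd P))).norm

lemma covariance_eq_integral_cdfCov (hXm : Measurable X) (hYm : Measurable Y)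
    (hX : MemLp X 2 P) (hY : MemLp Y 2 P) :
    cov[X, Y; P] = ∫ x, ∫ y, cdfCov P X Y x y := by
  have hK := integrable_hoeffdingKernel hXm hYm hX hY
  have hG : Integrable (Function.uncurry (cdfCov P X Y)) (volume.prod volume) := by
    refine (hK.swap.integral_prod_left.const_mul 2⁻¹).congr (ae_of_all _ fun q => ?_)
    show 2⁻¹ * ∫ p, hoeffdingKernel X Y p q ∂(P.prod P) = cdfCov P X Y q.1 q.2
    rw [integral_hoeffdingKernel_left hXm hYm, inv_mul_cancel_left₀ two_ne_zero]
  refine mul_left_cancel₀ two_ne_zero ?_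
  calc 2 * cov[X, Y; P]
      = ∫ p, (X p.1 - X p.2) * (Y p.1 - Y p.2) ∂(P.prod P) :=
        (integral_prod_sub_mul_sub hX hY).symm
    _ = ∫ p, ∫ q, hoeffdingKernel X Y p q ∂(volume.prod volume) ∂(P.prod P) := by
        simp_rw [integral_hoeffdingKernel_right]
    _ = ∫ q, ∫ p, hoeffdingKernel X Y p q ∂(P.prod P) ∂(volume.prod volume) :=
        integral_integral_swap hK
    _ = ∫ q, 2 * Function.uncurry (cdfCov P X Y) q ∂(volume.prod volume) := by
        simp_rw [integral_hoeffdingKernel_left hXm hYm]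
        rfl
    _ = 2 * ∫ x, ∫ y, cdfCov P X Y x y := by
        rw [integral_const_mul, integral_prod _ hG]
        rfl

end Kernel

end Hoeffding

open Hoeffding

/-- Hoeffding's covariance identity: for real random variables `X`, `Y` with finite
second moments, `Cov(X,Y) = ∫∫ [P(X ≤ x, Y ≤ y) − P(X ≤ x) P(Y ≤ y)] dx dy`. -/
theorem hoeffding_covariance_identity {Ω : Type*} [MeasurableSpace Ω]
    (P : Measure Ω) [IsProbabilityMeasure P] (X Y : Ω → ℝ)
    (hX : MemLp X 2 P) (hY : MemLp Y 2 P) :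
    ∫ ω, X ω * Y ω ∂P - (∫ ω, X ω ∂P) * (∫ ω, Y ω ∂P)
      = ∫ x, ∫ y,
          ((P {ω | X ω ≤ x ∧ Y ω ≤ y}).toReal
            - (P {ω | X ω ≤ x}).toReal * (P {ω | Y ω ≤ y}).toReal)
          ∂(volume : Measure ℝ) ∂(volume : Measure ℝ) := by
  obtain ⟨X', hX'm, hXX'⟩ := hX.aemeasurable
  obtain ⟨Y', hY'm, hYY'⟩ := hY.aemeasurable
  have key := covariance_eq_integral_cdfCov hX'm hY'm (hX.ae_eq hXX') (hY.ae_eq hYY')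
  rw [← covariance_congr_ae hXX' hYY', ← cdfCov_congr_ae hXX' hYY', covariance_eq_sub hX hY] at key
  exact key
end

section
/- Let F be a continuous distribution function on ℝ, 1 < p < ∞, and h ∈ L_p(F). Then ∫_ℝ |(1/(1−F(x))) ∫_{(x,∞)} h dF|^p dF(x) ≤ (p/(p−1))^p ∫_ℝ |h|^p dF. -/
open MeasureTheory Set Filter Topology

namespace HardyAux

noncomputable def Fd (μ : Measure ℝ) : ℝ → ℝ := fun x => (μ (Iic x)).toReal

variable {μ : Measure ℝ} [IsProbabilityMeasure μ]

lemma Fd_mono : Monotone (Fd μ) := fun _ _ hab =>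
  ENNReal.toReal_mono (measure_ne_top μ _) (measure_mono (Iic_subset_Iic.2 hab))

lemma Fd_nonneg (x : ℝ) : 0 ≤ Fd μ x := ENNReal.toReal_nonneg

lemma Fd_le_one (x : ℝ) : Fd μ x ≤ 1 := by
  have h : μ (Iic x) ≤ 1 := prob_le_one
  have := ENNReal.toReal_mono (by simp) h
  simpa [Fd] using this

lemma Fd_tendsto_atTop : Tendsto (Fd μ) atTop (𝓝 1) := by
  have h1 : Tendsto (fun x => μ (Iic x)) atTop (𝓝 (μ univ)) := tendsto_measure_Iic_atTop μ
  have h2 := (ENNReal.tendsto_toReal (measure_ne_top μ univ)).comp h1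
  have h3 : Tendsto (Fd μ) atTop (𝓝 (μ univ).toReal) := h2
  simpa using h3

lemma ofReal_Fd (x : ℝ) : ENNReal.ofReal (Fd μ x) = μ (Iic x) :=
  ENNReal.ofReal_toReal (measure_ne_top μ _)

/-- Probability integral transform: pushforward of `μ` by its continuous CDF is uniform. -/
lemma map_Fd (hF : Continuous (Fd μ)) : μ.map (Fd μ) = volume.restrict (Icc 0 1) := by
  refine Measure.ext_of_Iic _ _ (fun t => ?_)
  rw [Measure.map_apply hF.measurable measurableSet_Iic,
    Measure.restrict_apply measurableSet_Iic]
  rcases lt_or_ge t 0 with ht | ht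
  · have h1 : Fd μ ⁻¹' (Iic t) = ∅ := by
      ext x; simp only [mem_preimage, mem_Iic, mem_empty_iff_false, iff_false, not_le]
      exact lt_of_lt_of_le ht (Fd_nonneg x)
    have h2 : Iic t ∩ Icc (0:ℝ) 1 = ∅ := by
      ext s; simp only [mem_inter_iff, mem_Iic, mem_Icc, mem_empty_iff_false, iff_false]
      rintro ⟨hs1, hs2, _⟩; linarith
    simp [h1, h2]
  rcases le_or_gt 1 t with ht1 | ht1
  · have h1 : Fd μ ⁻¹' (Iic t) = univ :=
      eq_univ_of_forall fun x => le_trans (Fd_le_one x) ht1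
    have h2 : Iic t ∩ Icc (0:ℝ) 1 = Icc 0 1 :=
      inter_eq_self_of_subset_right fun s hs => le_trans hs.2 ht1
    simp [h1, h2, Real.volume_Icc]
  -- now 0 ≤ t < 1
  have h2 : Iic t ∩ Icc (0:ℝ) 1 = Icc 0 t := by
    ext s; simp only [mem_inter_iff, mem_Iic, mem_Icc]
    constructor
    · rintro ⟨hs1, hs2, _⟩; exact ⟨hs2, hs1⟩
    · rintro ⟨hs1, hs2⟩; exact ⟨hs2, hs1, le_trans hs2 ht1.le⟩
  rw [h2, Real.volume_Icc]
  set S := Fd μ ⁻¹' (Iic t) with hSdef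
  by_cases hne : S.Nonempty
  · have hclosed : IsClosed S := isClosed_Iic.preimage hF
    have hbdd : BddAbove S := by
      by_contra hb
      have hall : ∀ y : ℝ, Fd μ y ≤ t := by
        intro y
        obtain ⟨x, hxS, hyx⟩ := not_bddAbove_iff.1 hb y
        exact le_trans (Fd_mono hyx.le) hxS
      have : (1:ℝ) ≤ t := le_of_tendsto Fd_tendsto_atTop (Eventually.of_forall hall)
      linarith
    set z := sSup S with hz
    have hzS : z ∈ S := hclosed.csSup_mem hne hbdd
    have hSz : S = Iic z := by
      ext x; constructor
      · intro hx; exact le_csSup hbdd hx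
      · intro hx; exact le_trans (Fd_mono hx) hzS
    have hFz : Fd μ z = t := by
      refine le_antisymm hzS ?_
      by_contra hlt
      push_neg at hlt
      have hev : ∀ᶠ w in 𝓝 z, Fd μ w < t := (hF.tendsto z).eventually_lt_const hlt
      have hev2 : ∀ᶠ w in 𝓝[>] z, Fd μ w < t :=
        hev.filter_mono nhdsWithin_le_nhds
      obtain ⟨w, hwlt, hwz⟩ := (hev2.and eventually_mem_nhdsWithin).exists
      exact absurd (le_csSup hbdd (show w ∈ S from hwlt.le)) (not_le.2 hwz)
    have : μ S = ENNReal.ofReal (Fd μ z) := by rw [hSz, ofReal_Fd]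
    rw [this, hFz]; simp [ht]
  · rw [not_nonempty_iff_eq_empty] at hne
    rw [hne]
    have ht0 : t ≤ 0 := by
      by_contra h0
      push_neg at h0
      have hlt : ∀ x : ℝ, ENNReal.ofReal t ≤ μ (Iic x) := by
        intro x
        have : t < Fd μ x := by
          by_contra hc; push_neg at hc
          exact (eq_empty_iff_forall_notMem.1 hne x) hc
        rw [← ofReal_Fd]
        exact ENNReal.ofReal_le_ofReal this.le
      have htend : Tendsto (fun x : ℝ => μ (Iic x)) atBot (𝓝 (μ (⋂ x : ℝ, Iic x))) :=
        tendsto_measure_iInter_atBot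
          (fun x => (measurableSet_Iic).nullMeasurableSet)
          (fun _ _ h => Iic_subset_Iic.2 h) ⟨0, measure_ne_top μ _⟩
      have hempty : (⋂ x : ℝ, Iic x) = (∅ : Set ℝ) := by
        ext y; simp only [mem_iInter, mem_Iic, mem_empty_iff_false, iff_false, not_forall]
        exact ⟨y - 1, by push_neg; linarith⟩
      rw [hempty, measure_empty] at htend
      have := ge_of_tendsto htend (Eventually.of_forall hlt)
      simp only [le_zero_iff, ENNReal.ofReal_eq_zero] at this
      linarith
    have : t = 0 := le_antisymm ht0 ht
    simp [this]


lemma null_level (hF : Continuous (Fd μ)) (c : ℝ) : μ (Fd μ ⁻¹' {c}) = 0 := by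
  rw [← Measure.map_apply hF.measurable (measurableSet_singleton c), map_Fd hF,
    Measure.restrict_apply (measurableSet_singleton c)]
  exact measure_mono_null inter_subset_left Real.volume_singleton

lemma Ioi_ae_eq (hF : Continuous (Fd μ)) (x : ℝ) :
    (Ioi x : Set ℝ) =ᵐ[μ] Fd μ ⁻¹' (Ioi (Fd μ x)) := by
  rw [MeasureTheory.ae_eq_set]
  constructor
  · refine measure_mono_null (fun y hy => ?_) (null_level hF (Fd μ x))
    simp only [mem_diff, mem_Ioi, mem_preimage, not_lt] at hy
    exact le_antisymm hy.2 (Fd_mono hy.1.le)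
  · refine measure_mono_null (fun y hy => ?_) (measure_empty (μ := μ))
    simp only [mem_diff, mem_preimage, mem_Ioi, not_lt] at hy
    exact absurd (Fd_mono hy.2) (not_le.2 hy.1)

lemma Iio_ae_eq (hF : Continuous (Fd μ)) (y : ℝ) :
    (Iio y : Set ℝ) =ᵐ[μ] Fd μ ⁻¹' (Iio (Fd μ y)) := by
  rw [MeasureTheory.ae_eq_set]
  constructor
  · refine measure_mono_null (fun x hx => ?_) (null_level hF (Fd μ y))
    simp only [mem_diff, mem_Iio, mem_preimage, not_lt] at hx
    exact le_antisymm (Fd_mono hx.1.le) hx.2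
  · refine measure_mono_null (fun x hx => ?_) (measure_empty (μ := μ))
    simp only [mem_diff, mem_preimage, mem_Iio, not_lt] at hx
    exact absurd (Fd_mono hx.2) (not_le.2 hx.1)

lemma lint_Ioi (hF : Continuous (Fd μ)) {φ : ℝ → ENNReal} (hφ : Measurable φ) (x : ℝ) :
    ∫⁻ y in Ioi x, φ (Fd μ y) ∂μ
      = ∫⁻ s in Ioi (Fd μ x) ∩ Icc 0 1, φ s := by
  rw [setLIntegral_congr (Ioi_ae_eq hF x),
    ← setLIntegral_map measurableSet_Ioi hφ hF.measurable, map_Fd hF,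
    Measure.restrict_restrict measurableSet_Ioi]

lemma lint_Iio (hF : Continuous (Fd μ)) {φ : ℝ → ENNReal} (hφ : Measurable φ) (y : ℝ) :
    ∫⁻ x in Iio y, φ (Fd μ x) ∂μ
      = ∫⁻ s in Iio (Fd μ y) ∩ Icc 0 1, φ s := by
  rw [setLIntegral_congr (Iio_ae_eq hF y),
    ← setLIntegral_map measurableSet_Iio hφ hF.measurable, map_Fd hF,
    Measure.restrict_restrict measurableSet_Iio]

lemma meas_ofReal_rpow (a : ℝ) :
    Measurable (fun s : ℝ => ENNReal.ofReal (1 - s) ^ a) :=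
  (ENNReal.continuous_rpow_const.comp
    (ENNReal.continuous_ofReal.comp (continuous_const.sub continuous_id))).measurable

/-- Key estimate 1. -/
lemma key1 {p : ℝ} (hp : 1 < p) (hF : Continuous (Fd μ)) (x : ℝ) :
    ∫⁻ y in Ioi x, ENNReal.ofReal (1 - Fd μ y) ^ (-(1/p)) ∂μ
      ≤ ENNReal.ofReal (p/(p-1)) * ENNReal.ofReal (1 - Fd μ x) ^ ((p-1)/p) := by
  have hp0 : (0:ℝ) < p := lt_trans one_pos hp
  have hp1 : (0:ℝ) < p - 1 := by linarith
  set u := Fd μ x with hu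
  have hu0 : 0 ≤ u := Fd_nonneg x
  have hu1 : u ≤ 1 := Fd_le_one x
  rw [lint_Ioi hF (meas_ofReal_rpow (-(1/p))) x]
  have hset : Ioi u ∩ Icc (0:ℝ) 1 = Ioc u 1 := by
    ext s; simp only [mem_inter_iff, mem_Ioi, mem_Icc, mem_Ioc]
    exact ⟨fun ⟨h1, _, h3⟩ => ⟨h1, h3⟩, fun ⟨h1, h2⟩ => ⟨h1, le_trans hu0 h1.le, h2⟩⟩
  rw [hset, setLIntegral_congr ((Ioo_ae_eq_Ioc (a := u) (b := (1:ℝ))).symm)]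
  have hcongr : ∫⁻ s in Ioo u 1, ENNReal.ofReal (1 - s) ^ (-(1/p))
      = ∫⁻ s in Ioo u 1, ENNReal.ofReal ((1 - s) ^ (-(1/p))) := by
    refine setLIntegral_congr_fun measurableSet_Ioo (fun s hs => ?_)
    exact ENNReal.ofReal_rpow_of_pos (by linarith [hs.2])
  rw [hcongr]
  rcases le_or_gt 1 u with h1u | h1u
  · have : Ioo u 1 = (∅ : Set ℝ) := Ioo_eq_empty (by linarith)
    rw [this]
    simp
  have hInt : IntegrableOn (fun s : ℝ => (1 - s) ^ (-(1/p))) (Ioo u 1) := by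
    have h1 : IntervalIntegrable (fun v : ℝ => v ^ (-(1/p))) volume 0 (1 - u) :=
      intervalIntegral.intervalIntegrable_rpow' (by rw [neg_lt, neg_neg, div_lt_iff₀ hp0]; linarith)
    have h2 := h1.comp_sub_left 1
    simp only [sub_zero, sub_sub_cancel] at h2
    rw [intervalIntegrable_iff] at h2
    refine h2.mono_set ?_
    rw [uIoc_comm, uIoc_of_le (by linarith : u ≤ 1)]
    exact Ioo_subset_Ioc_self
  rw [← ofReal_integral_eq_lintegral_ofReal hInt
    (ae_restrict_of_forall_mem measurableSet_Ioo fun s hs =>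
      Real.rpow_nonneg (by linarith [hs.2]) _)]
  have hval : ∫ s in Ioo u 1, (1 - s) ^ (-(1/p)) = (1-u) ^ ((p-1)/p) * (p/(p-1)) := by
    rw [← integral_Ioc_eq_integral_Ioo, ← intervalIntegral.integral_of_le h1u.le,
      intervalIntegral.integral_comp_sub_left (fun v : ℝ => v ^ (-(1/p))) 1]
    simp only [sub_self]
    rw [integral_rpow (Or.inl (by rw [neg_lt, neg_neg, div_lt_iff₀ hp0]; linarith))]
    have he : -(1/p) + 1 = (p-1)/p := by field_simp; ring
    rw [he, Real.zero_rpow (by positivity), sub_zero, div_eq_mul_inv, inv_div]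
  rw [hval, ENNReal.ofReal_rpow_of_nonneg (by linarith : (0:ℝ) ≤ 1 - u)
      (div_nonneg hp1.le hp0.le),
    ← ENNReal.ofReal_mul (div_nonneg hp0.le hp1.le)]
  exact le_of_eq (by rw [mul_comm])


/-- Key estimate 2. -/
lemma key2 {p : ℝ} (hp : 1 < p) (hF : Continuous (Fd μ)) (y : ℝ) :
    ∫⁻ x in Iio y, ENNReal.ofReal (1 - Fd μ x) ^ ((p-1)/p * (p-1) - p) ∂μ
      ≤ ENNReal.ofReal (p/(p-1)) * ENNReal.ofReal (1 - Fd μ y) ^ (-((p-1)/p)) := by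
  have hp0 : (0:ℝ) < p := lt_trans one_pos hp
  have hp1 : (0:ℝ) < p - 1 := by linarith
  have he : (0:ℝ) < (p-1)/p := div_pos hp1 hp0
  set β : ℝ := (p-1)/p * (p-1) - p with hβ
  set u := Fd μ y with hu
  have hu0 : 0 ≤ u := Fd_nonneg y
  have hu1 : u ≤ 1 := Fd_le_one y
  rcases eq_or_lt_of_le hu1 with h1u | h1u
  · -- u = 1 : right side is ∞
    have : ENNReal.ofReal (1 - u) ^ (-((p-1)/p)) = (⊤ : ENNReal) := by
      have h0 : (1:ℝ) - u = 0 := by rw [← h1u]; ring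
      rw [h0, ENNReal.ofReal_zero, ENNReal.zero_rpow_def]
      rw [if_neg (not_lt.2 (neg_nonpos.2 he.le)), if_neg (neg_ne_zero.2 he.ne')]
    rw [this, ENNReal.mul_top (by simpa using div_pos hp0 hp1)]
    exact le_top
  have hw : 0 < 1 - u := by linarith
  rw [lint_Iio hF (meas_ofReal_rpow β) y]
  have hset : Iio u ∩ Icc (0:ℝ) 1 = Ico 0 u := by
    ext s; simp only [mem_inter_iff, mem_Iio, mem_Icc, mem_Ico]
    exact ⟨fun ⟨a, b, _⟩ => ⟨b, a⟩, fun ⟨a, b⟩ => ⟨b, a, by linarith⟩⟩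
  rw [hset, setLIntegral_congr ((Ioo_ae_eq_Ico (a := (0:ℝ)) (b := u)).symm)]
  have hcongr : ∫⁻ s in Ioo (0:ℝ) u, ENNReal.ofReal (1 - s) ^ β
      = ∫⁻ s in Ioo (0:ℝ) u, ENNReal.ofReal ((1 - s) ^ β) := by
    refine setLIntegral_congr_fun measurableSet_Ioo (fun s hs => ?_)
    exact ENNReal.ofReal_rpow_of_pos (by linarith [hs.2])
  rw [hcongr]
  have hcont : ContinuousOn (fun s : ℝ => (1 - s) ^ β) (Icc 0 u) := by
    refine ContinuousOn.rpow_const ((continuous_const.sub continuous_id).continuousOn) ?_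
    intro s hs
    exact Or.inl (by simp only [mem_Icc] at hs; intro hc; nlinarith [hs.2])
  have hInt : IntegrableOn (fun s : ℝ => (1 - s) ^ β) (Ioo 0 u) :=
    (hcont.integrableOn_Icc).mono_set Ioo_subset_Icc_self
  rw [← ofReal_integral_eq_lintegral_ofReal hInt
    (ae_restrict_of_forall_mem measurableSet_Ioo fun s hs =>
      Real.rpow_nonneg (by linarith [hs.2]) _)]
  have hβ1 : β + 1 = -((p-1)/p) := by rw [hβ]; field_simp; ring
  have hval : ∫ s in Ioo (0:ℝ) u, (1 - s) ^ β
      = (1 - (1-u) ^ (-((p-1)/p))) / (-((p-1)/p)) := by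
    rw [← integral_Ioc_eq_integral_Ioo, ← intervalIntegral.integral_of_le hu0,
      intervalIntegral.integral_comp_sub_left (fun v : ℝ => v ^ β) 1]
    simp only [sub_zero]
    have hβne : β ≠ -1 := by
      intro hc
      rw [hc] at hβ1
      linarith [hβ1, he]
    rw [integral_rpow (Or.inr ⟨hβne, by
        rw [Set.uIcc_of_le (by linarith : 1 - u ≤ 1)]
        intro hc
        exact absurd hc.1 (by linarith)⟩)]
    rw [hβ1, Real.one_rpow]
  rw [hval]
  have hstep : (1 - (1-u) ^ (-((p-1)/p))) / (-((p-1)/p))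
      ≤ (p/(p-1)) * (1-u) ^ (-((p-1)/p)) := by
    have hq : p/(p-1) = ((p-1)/p)⁻¹ := by rw [inv_div]
    rw [hq, div_neg, ← neg_div, neg_sub, div_eq_mul_inv]
    nlinarith [Real.rpow_nonneg hw.le (-((p-1)/p)), div_pos hp0 hp1]
  calc ENNReal.ofReal ((1 - (1-u) ^ (-((p-1)/p))) / (-((p-1)/p)))
      ≤ ENNReal.ofReal ((p/(p-1)) * (1-u) ^ (-((p-1)/p))) := ENNReal.ofReal_le_ofReal hstep
    _ = ENNReal.ofReal (p/(p-1)) * ENNReal.ofReal (1 - u) ^ (-((p-1)/p)) := by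
        rw [ENNReal.ofReal_mul (div_nonneg hp0.le hp1.le), ENNReal.ofReal_rpow_of_pos hw]


lemma main_lintegral {p : ℝ} (hp : 1 < p) (hF : Continuous (Fd μ))
    {c : ℝ → ENNReal} (hc : Measurable c) :
    ∫⁻ x, ((∫⁻ y in Ioi x, c y ∂μ) / ENNReal.ofReal (1 - Fd μ x)) ^ p ∂μ
      ≤ ENNReal.ofReal ((p/(p-1))^p) * ∫⁻ y, c y ^ p ∂μ := by
  have hp0 : (0:ℝ) < p := lt_trans one_pos hp
  have hp1 : (0:ℝ) < p - 1 := by linarith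
  set e : ℝ := (p-1)/p with hedef
  have he : 0 < e := div_pos hp1 hp0
  set q : ℝ := p/(p-1) with hqdef
  have hq0 : 0 < q := div_pos hp0 hp1
  have hpq : p.HolderConjugate q := (Real.holderConjugate_iff_eq_conjExponent hp).2 hqdef
  set W : ℝ → ENNReal := fun x => ENNReal.ofReal (1 - Fd μ x) with hWdef
  have hWm : Measurable W :=
    (ENNReal.continuous_ofReal.comp (continuous_const.sub hF)).measurable
  have hWa : ∀ a : ℝ, Measurable fun x => W x ^ a :=
    fun a => (meas_ofReal_rpow a).comp hF.measurable
  have hWtop : ∀ y, W y ≠ ⊤ := fun y => ENNReal.ofReal_ne_top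
  have hW0 : μ {y | W y = 0} = 0 := by
    refine measure_mono_null (fun y hy => ?_) (null_level hF 1)
    simp only [hWdef, mem_setOf_eq, ENNReal.ofReal_eq_zero] at hy
    have : Fd μ y = 1 := le_antisymm (Fd_le_one y) (by linarith)
    simpa [mem_preimage] using this
  have hcp : Measurable fun y => c y ^ p :=
    ENNReal.continuous_rpow_const.measurable.comp hc
  -- exponent arithmetic
  have hq_inv : 1/q = e := by rw [hqdef, hedef, one_div_div]
  have hep : e/p * p = e := div_mul_cancel₀ e hp0.ne'
  have heq : e/p * q = 1/p := by
    rw [hedef, hqdef]; field_simp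
  have hm : 1/q * p = p - 1 := by
    rw [hq_inv, hedef]; field_simp
  have hβ : e * (p - 1) - p = e * (p-1) - p := rfl
  set κ : ENNReal := ENNReal.ofReal q with hκdef
  have hκ0 : κ ≠ 0 := by simp [hκdef, hq0, ENNReal.ofReal_eq_zero, not_le, hq0]
  have hκt : κ ≠ ⊤ := ENNReal.ofReal_ne_top
  -- a.e. splitting of c
  have hae : ∀ᵐ y ∂μ, c y = c y * W y ^ (e/p) * W y ^ (-(e/p)) := by
    refine ae_iff.2 (measure_mono_null (fun y hy => ?_) hW0)
    simp only [mem_setOf_eq] at hy ⊢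
    by_contra hne
    refine hy ?_
    rw [mul_assoc, ← ENNReal.rpow_add _ _ hne (hWtop y), add_neg_cancel,
      ENNReal.rpow_zero, mul_one]
  -- the inner averaged integral, bounded via Hölder and key1
  set A : ℝ → ENNReal := fun x => ∫⁻ y in Ioi x, c y ^ p * W y ^ e ∂μ with hAdef
  have holder : ∀ x, (∫⁻ y in Ioi x, c y ∂μ) ≤ A x ^ (1/p) * (κ * W x ^ e) ^ (1/q) := by
    intro x
    have h1 : (∫⁻ y in Ioi x, c y ∂μ)
        = ∫⁻ y in Ioi x,
            ((fun y => c y * W y ^ (e/p)) * fun y => W y ^ (-(e/p))) y ∂μ := by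
      refine lintegral_congr_ae ((ae_restrict_of_ae hae).mono fun y hy => ?_)
      simpa using hy
    rw [h1]
    have h2 := ENNReal.lintegral_mul_le_Lp_mul_Lq (μ.restrict (Ioi x)) hpq
      ((hc.mul (hWa (e/p))).aemeasurable) ((hWa (-(e/p))).aemeasurable)
    refine le_trans h2 ?_
    have h3 : ∫⁻ y in Ioi x, (c y * W y ^ (e/p)) ^ p ∂μ = A x := by
      rw [hAdef]
      refine lintegral_congr fun y => ?_
      rw [ENNReal.mul_rpow_of_nonneg _ _ hp0.le, ← ENNReal.rpow_mul, hep]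
    have h4 : ∫⁻ y in Ioi x, (W y ^ (-(e/p))) ^ q ∂μ ≤ κ * W x ^ e := by
      have h5 : ∫⁻ y in Ioi x, (W y ^ (-(e/p))) ^ q ∂μ
          = ∫⁻ y in Ioi x, W y ^ (-(1/p)) ∂μ := by
        refine lintegral_congr fun y => ?_
        rw [← ENNReal.rpow_mul, neg_mul, heq]
      rw [h5]
      exact key1 hp hF x
    rw [show (∫⁻ a in Ioi x, (c * fun x => W x ^ (e / p)) a ^ p ∂μ) = A x from h3]
    exact mul_le_mul_right (ENNReal.rpow_le_rpow h4 (by positivity)) _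
  -- pointwise bound for the integrand
  have hbb : ∀ b : ENNReal, b ≠ ⊤ → b ^ (e * (p-1)) / b ^ p ≤ b ^ (e * (p-1) - p) := by
    intro b hbt
    rcases eq_or_ne b 0 with rfl | hb0
    · rw [ENNReal.zero_rpow_of_pos (by positivity), ENNReal.zero_div]
      exact zero_le
    · rw [div_eq_mul_inv, ← ENNReal.rpow_neg, ← ENNReal.rpow_add _ _ hb0 hbt,
        ← sub_eq_add_neg]
  have hpoint : ∀ x, ((∫⁻ y in Ioi x, c y ∂μ) / W x) ^ p
      ≤ κ ^ (p-1) * (W x ^ (e * (p-1) - p) * A x) := by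
    intro x
    rw [ENNReal.div_rpow_of_nonneg _ _ hp0.le]
    calc (∫⁻ y in Ioi x, c y ∂μ) ^ p / W x ^ p
        ≤ (A x ^ (1/p) * (κ * W x ^ e) ^ (1/q)) ^ p / W x ^ p := by
          exact ENNReal.div_le_div_right (ENNReal.rpow_le_rpow (holder x) hp0.le) _
      _ = (A x * (κ ^ (p-1) * W x ^ (e * (p-1)))) / W x ^ p := by
          congr 1
          rw [ENNReal.mul_rpow_of_nonneg _ _ hp0.le, ← ENNReal.rpow_mul,
            ← ENNReal.rpow_mul, one_div_mul_cancel hp0.ne', ENNReal.rpow_one, hm,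
            ENNReal.mul_rpow_of_nonneg _ _ (by linarith : (0:ℝ) ≤ p - 1),
            ← ENNReal.rpow_mul]
      _ = κ ^ (p-1) * (A x * (W x ^ (e * (p-1)) / W x ^ p)) := by
          rw [mul_div_assoc, mul_div_assoc]
          ring
      _ ≤ κ ^ (p-1) * (A x * W x ^ (e * (p-1) - p)) :=
          mul_le_mul_right (mul_le_mul_right (hbb (W x) (hWtop x)) _) _
      _ = κ ^ (p-1) * (W x ^ (e * (p-1) - p) * A x) := by rw [mul_comm (A x)]
  -- kernels for Tonelli
  set C : ℝ → ENNReal := fun y => c y ^ p * W y ^ e with hCdef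
  have hCm : Measurable C := hcp.mul (hWa e)
  set K : ℝ × ℝ → ENNReal :=
    fun z => ({q : ℝ × ℝ | q.1 < q.2}).indicator
      (fun z => W z.1 ^ (e * (p-1) - p) * C z.2) z with hKdef
  have hKm : Measurable K := by
    refine Measurable.indicator ?_ (measurableSet_lt measurable_fst measurable_snd)
    exact ((hWa (e * (p-1) - p)).comp measurable_fst).mul (hCm.comp measurable_snd)
  have hKern : ∀ x, W x ^ (e * (p-1) - p) * A x = ∫⁻ y, K (x, y) ∂μ := by
    intro x
    rw [hAdef]
    simp only
    rw [← lintegral_indicator measurableSet_Ioi, ← lintegral_const_mul _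
      ((hCm.indicator measurableSet_Ioi))]
    refine lintegral_congr fun y => ?_
    by_cases hxy : x < y <;>
      simp [hKdef, hCdef, Set.indicator_apply, mem_Ioi, hxy]
  -- put everything together
  calc ∫⁻ x, ((∫⁻ y in Ioi x, c y ∂μ) / W x) ^ p ∂μ
      ≤ ∫⁻ x, κ ^ (p-1) * (W x ^ (e * (p-1) - p) * A x) ∂μ :=
        lintegral_mono hpoint
    _ = κ ^ (p-1) * ∫⁻ x, ∫⁻ y, K (x, y) ∂μ ∂μ := by
        simp_rw [hKern]
        rw [lintegral_const_mul _ hKm.lintegral_prod_right']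
    _ = κ ^ (p-1) * ∫⁻ y, ∫⁻ x, K (x, y) ∂μ ∂μ := by
        rw [lintegral_lintegral_swap hKm.aemeasurable]
    _ ≤ κ ^ (p-1) * ∫⁻ y, (κ * W y ^ (-e)) * C y ∂μ := by
        refine mul_le_mul_right (lintegral_mono fun y => ?_) _
        have hxint : ∫⁻ x, K (x, y) ∂μ
            = (∫⁻ x in Iio y, W x ^ (e * (p-1) - p) ∂μ) * C y := by
          rw [← lintegral_indicator measurableSet_Iio, ← lintegral_mul_const _
            ((hWa (e * (p-1) - p)).indicator measurableSet_Iio)]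
          refine lintegral_congr fun x => ?_
          by_cases hxy : x < y <;>
            simp [hKdef, Set.indicator_apply, mem_Iio, hxy]
        rw [hxint]
        refine mul_le_mul_left ?_ _
        have := key2 hp hF y
        simpa [hWdef, hedef] using this
    _ ≤ κ ^ (p-1) * ∫⁻ y, κ * (c y ^ p) ∂μ := by
        refine mul_le_mul_right (lintegral_mono fun y => ?_) _
        have hWW : W y ^ (-e) * W y ^ e ≤ 1 := by
          rcases eq_or_ne (W y) 0 with h0 | h0
          · rw [h0, ENNReal.zero_rpow_of_pos he, mul_zero]
            exact zero_le_one
          · rw [← ENNReal.rpow_add _ _ h0 (hWtop y), neg_add_cancel,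
              ENNReal.rpow_zero]
        calc (κ * W y ^ (-e)) * C y = κ * (c y ^ p * (W y ^ (-e) * W y ^ e)) := by
              rw [hCdef]; ring
          _ ≤ κ * (c y ^ p * 1) := mul_le_mul_right (mul_le_mul_right hWW _) _
          _ = κ * c y ^ p := by rw [mul_one]
    _ = κ ^ (p-1) * (κ * ∫⁻ y, c y ^ p ∂μ) := by
        rw [lintegral_const_mul _ hcp]
    _ = ENNReal.ofReal ((p/(p-1))^p) * ∫⁻ y, c y ^ p ∂μ := by
        rw [← mul_assoc]
        congr 1
        have h1 : κ ^ (p-1) * κ = κ ^ p := by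
          nth_rewrite 2 [← ENNReal.rpow_one κ]
          rw [← ENNReal.rpow_add _ _ hκ0 hκt]
          norm_num
        rw [h1, hκdef, ENNReal.ofReal_rpow_of_pos hq0]

end HardyAux

open HardyAux in
/-- Hardy-type inequality (right version). -/
theorem hardy_right (μ : Measure ℝ) [IsProbabilityMeasure μ]
    (hF : Continuous fun x => (μ (Iic x)).toReal)
    (p : ℝ) (hp : 1 < p) (h : ℝ → ℝ) (hmem : MemLp h (ENNReal.ofReal p) μ) :
    ∫ x, |(1 / (1 - (μ (Iic x)).toReal)) * ∫ y in Ioi x, h y ∂μ| ^ p ∂μ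
      ≤ (p / (p - 1)) ^ p * ∫ x, |h x| ^ p ∂μ := by
  have hp0 : (0:ℝ) < p := lt_trans one_pos hp
  have hp1 : (0:ℝ) < p - 1 := by linarith
  have hF' : Continuous (Fd μ) := hF
  -- measurable representative of h in ℝ≥0∞
  set g : ℝ → ℝ := (hmem.aestronglyMeasurable.mk h) with hgdef
  have hge : h =ᵐ[μ] g := hmem.aestronglyMeasurable.ae_eq_mk
  set c : ℝ → ENNReal := fun y => (‖g y‖₊ : ENNReal) with hcdef
  have hc : Measurable c :=
    hmem.aestronglyMeasurable.stronglyMeasurable_mk.measurable.nnnorm.coe_nnreal_ennreal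
  have hcee : (fun y => (‖h y‖₊ : ENNReal)) =ᵐ[μ] c := hge.mono fun y hy => by
    simp only [hcdef, hy]
  -- h is integrable
  have hInth : Integrable h μ :=
    memLp_one_iff_integrable.1
      (hmem.mono_exponent (ENNReal.one_le_ofReal.2 hp.le))
  have htot : ∫⁻ y, c y ∂μ < ⊤ := by
    rw [← lintegral_congr_ae hcee]
    exact hInth.2
  set W : ℝ → ENNReal := fun x => ENNReal.ofReal (1 - Fd μ x) with hWdef
  have hWm : Measurable W :=
    (ENNReal.continuous_ofReal.comp (continuous_const.sub hF')).measurable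
  have hW0 : μ {y | W y = 0} = 0 := by
    refine measure_mono_null (fun y hy => ?_) (null_level hF' 1)
    simp only [hWdef, mem_setOf_eq, ENNReal.ofReal_eq_zero] at hy
    have : Fd μ y = 1 := le_antisymm (Fd_le_one y) (by linarith)
    simpa [mem_preimage] using this
  set G : ℝ → ENNReal := fun x => ∫⁻ y in Ioi x, c y ∂μ with hGdef
  have hGfin : ∀ x, G x < ⊤ := fun x =>
    lt_of_le_of_lt (setLIntegral_le_lintegral _ _) htot
  have hGm : Measurable G := by
    have hKm : Measurable fun z : ℝ × ℝ =>
        ({q : ℝ × ℝ | q.1 < q.2}).indicator (fun z => c z.2) z :=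
      Measurable.indicator (hc.comp measurable_snd)
        (measurableSet_lt measurable_fst measurable_snd)
    have h2 : G = fun x => ∫⁻ y,
        ({q : ℝ × ℝ | q.1 < q.2}).indicator (fun z => c z.2) (x, y) ∂μ := by
      funext x
      rw [hGdef]
      simp only
      rw [← lintegral_indicator measurableSet_Ioi]
      refine lintegral_congr fun y => ?_
      by_cases hxy : x < y <;> simp [Set.indicator_apply, mem_Ioi, hxy]
    rw [h2]
    exact hKm.lintegral_prod_right'
  set Φ : ℝ → ENNReal := fun x => (G x / W x) ^ p with hΦdef
  have hΦm : Measurable Φ :=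
    ENNReal.continuous_rpow_const.measurable.comp (hGm.div hWm)
  have main := main_lintegral (μ := μ) hp hF' hc
  -- identification of the right-hand side
  have hint2 : Integrable (fun x => |h x| ^ p) μ := by
    have := hmem.integrable_norm_rpow (by simp [hp0]) ENNReal.ofReal_ne_top
    simpa [ENNReal.toReal_ofReal hp0.le, Real.norm_eq_abs] using this
  have hR : ∫⁻ y, c y ^ p ∂μ = ENNReal.ofReal (∫ x, |h x| ^ p ∂μ) := by
    have h1 : (fun y => c y ^ p) =ᵐ[μ] fun y => ENNReal.ofReal (|h y| ^ p) := by
      refine hge.mono fun y hy => ?_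
      rw [hcdef]
      simp only
      rw [← enorm_eq_nnnorm, ← ofReal_norm, ENNReal.ofReal_rpow_of_nonneg (norm_nonneg _) hp0.le,
        ← hy, Real.norm_eq_abs]
    rw [lintegral_congr_ae h1,
      ← ofReal_integral_eq_lintegral_ofReal hint2
        (Eventually.of_forall fun y => Real.rpow_nonneg (abs_nonneg _) _)]
  have hRtop : ∫⁻ y, c y ^ p ∂μ ≠ ⊤ := by rw [hR]; exact ENNReal.ofReal_ne_top
  have hrhsfin : ENNReal.ofReal ((p/(p-1))^p) * ∫⁻ y, c y ^ p ∂μ ≠ ⊤ :=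
    ENNReal.mul_ne_top ENNReal.ofReal_ne_top hRtop
  have hΦtot : ∫⁻ x, Φ x ∂μ ≠ ⊤ := ne_top_of_le_ne_top hrhsfin main
  -- pointwise comparison
  have hpt : ∀ x, |(1 / (1 - (μ (Iic x)).toReal)) * ∫ y in Ioi x, h y ∂μ| ^ p
      ≤ (Φ x).toReal := by
    intro x
    show |(1 / (1 - Fd μ x)) * ∫ y in Ioi x, h y ∂μ| ^ p ≤ (Φ x).toReal
    by_cases hx : 1 - Fd μ x ≤ 0
    · have h1 : 1 - Fd μ x = 0 := le_antisymm hx (by linarith [Fd_le_one (μ := μ) x])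
      rw [h1, div_zero, zero_mul, abs_zero, Real.zero_rpow hp0.ne']
      exact ENNReal.toReal_nonneg
    · push_neg at hx
      have hWne : W x ≠ 0 := by
        simp only [hWdef, Ne, ENNReal.ofReal_eq_zero, not_le]
        exact hx
      have hb : |(1 / (1 - Fd μ x)) * ∫ y in Ioi x, h y ∂μ|
          ≤ (G x / W x).toReal := by
        rw [abs_mul, abs_of_nonneg (by positivity : (0:ℝ) ≤ 1/(1 - Fd μ x))]
        have hI : |∫ y in Ioi x, h y ∂μ| ≤ (G x).toReal := by
          have h2 := norm_integral_le_lintegral_norm (μ := μ.restrict (Ioi x)) h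
          rw [Real.norm_eq_abs] at h2
          refine le_trans h2 (le_of_eq ?_)
          congr 1
          refine lintegral_congr_ae ((ae_restrict_of_ae (hcee.mono fun y hy => ?_)))
          show ENNReal.ofReal ‖h y‖ = c y
          rw [ofReal_norm]
          exact hy
        calc (1/(1 - Fd μ x)) * |∫ y in Ioi x, h y ∂μ|
            ≤ (1/(1 - Fd μ x)) * (G x).toReal :=
              mul_le_mul_of_nonneg_left hI (by positivity)
          _ = (G x / W x).toReal := by
              rw [ENNReal.toReal_div, hWdef]
              simp only
              rw [ENNReal.toReal_ofReal hx.le, one_div, inv_mul_eq_div]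
      calc |(1 / (1 - Fd μ x)) * ∫ y in Ioi x, h y ∂μ| ^ p
          ≤ ((G x / W x).toReal) ^ p :=
            Real.rpow_le_rpow (abs_nonneg _) hb hp0.le
        _ = (Φ x).toReal := ENNReal.toReal_rpow _ _
  have hΦae : ∀ᵐ x ∂μ, Φ x < ⊤ := by
    refine ae_iff.2 (measure_mono_null (fun x hx => ?_) hW0)
    simp only [mem_setOf_eq, not_lt, top_le_iff] at hx
    by_contra hWne
    simp only [mem_setOf_eq] at hWne
    refine (ENNReal.rpow_lt_top_of_nonneg hp0.le
      (ENNReal.div_lt_top (hGfin x).ne hWne).ne).ne hx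
  have hΦint : Integrable (fun x => (Φ x).toReal) μ :=
    integrable_toReal_of_lintegral_ne_top hΦm.aemeasurable hΦtot
  calc ∫ x, |(1 / (1 - (μ (Iic x)).toReal)) * ∫ y in Ioi x, h y ∂μ| ^ p ∂μ
      ≤ ∫ x, (Φ x).toReal ∂μ :=
        integral_mono_of_nonneg
          (Eventually.of_forall fun x => Real.rpow_nonneg (abs_nonneg _) _)
          hΦint (Eventually.of_forall hpt)
    _ = (∫⁻ x, Φ x ∂μ).toReal := integral_toReal hΦm.aemeasurable hΦae
    _ ≤ (ENNReal.ofReal ((p/(p-1))^p) * ∫⁻ y, c y ^ p ∂μ).toReal :=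
        ENNReal.toReal_mono hrhsfin main
    _ = (p / (p - 1)) ^ p * ∫ x, |h x| ^ p ∂μ := by
        rw [hR, ← ENNReal.ofReal_mul (by positivity),
          ENNReal.toReal_ofReal
            (mul_nonneg (by positivity) (integral_nonneg fun x => Real.rpow_nonneg (abs_nonneg _) _))]
end

section
/- Let μ be a probability measure on ℝ with positive density and finite isoperimetric constant Is(μ) > 0, and let p be an odd positive integer with p ≥ 3. If u ∈ L_p(μ) is absolutely continuous with E[u^p] = 0, then ‖u‖_p ≤ 2p · Is(μ)⁻¹ · ‖u'‖_p. -/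
/-!
Let `m` be a median of `μ` and `h = u - u m`. As `h ^ p` vanishes at `m`, `|h x| ^ p` is at most the
integral of `|(h ^ p)'|` between `m` and `x`. Integrating in `x` against `μ` and swapping the
integrals weighs `|(h ^ p)' t|` by the `μ`-mass lying beyond `t` as seen from `m`, which is at most
`min (F t) (1 - F t) ≤ f t / Is(μ)`. Hence `Is(μ) ‖h‖_p ^ p ≤ p ∫ |h| ^ (p - 1) |u'| dμ`, and Hölder
gives `‖u - u m‖_p ≤ p Is(μ)⁻¹ ‖u'‖_p`. Finally, for odd `p` the condition `E[u ^ p] = 0` says that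
the positive and negative parts of `u` have the same `p`-th moment, and one of them is dominated by
`|u - c|` for any constant `c`; so `‖u‖_p ^ p ≤ 2 ‖u - c‖_p ^ p`.
-/

open MeasureTheory Set ENNReal

/-- The distribution function of a measure on `ℝ`. -/
noncomputable def cdf (μ : MeasureTheory.Measure ℝ) (x : ℝ) : ℝ := (μ (Set.Iic x)).toReal

/-- The one-dimensional isoperimetric constant `Is(μ)`. -/
noncomputable def isopConst (μ : MeasureTheory.Measure ℝ) (f : ℝ → ℝ) : ℝ :=
  essInf (fun x => f x / min (cdf μ x) (1 - cdf μ x))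
    (volume.restrict {x : ℝ | 0 < cdf μ x ∧ cdf μ x < 1})

open Filter

theorem measurable_of_hasDerivAt {φ φ' : ℝ → ℝ} (hφ : ∀ x, HasDerivAt φ (φ' x) x) :
    Measurable φ' := by
  rw [show φ' = deriv φ from funext fun x => (hφ x).deriv.symm]
  exact measurable_deriv φ

theorem enorm_sub_le_lintegral_uIcc {φ φ' : ℝ → ℝ} (hφ : ∀ x, HasDerivAt φ (φ' x) x) (a b : ℝ) :
    ‖φ b - φ a‖ₑ ≤ ∫⁻ t in uIcc a b, ‖φ' t‖ₑ := by
  wlog hab : a ≤ b generalizing a b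
  · rw [enorm_sub_rev, uIcc_comm]
    exact this b a (le_of_not_ge hab)
  by_cases hfin : ∫⁻ t in uIcc a b, ‖φ' t‖ₑ = ∞
  · simp [hfin]
  have hint : IntegrableOn φ' (uIcc a b) :=
    ⟨(measurable_of_hasDerivAt hφ).aestronglyMeasurable, lt_top_iff_ne_top.2 hfin⟩
  rw [← intervalIntegral.integral_eq_sub_of_hasDerivAt (fun x _ => hφ x) hint.intervalIntegrable,
    intervalIntegral.integral_of_le hab, uIcc_of_le hab]
  exact (enorm_integral_le_lintegral_enorm _).trans (lintegral_mono_set Ioc_subset_Icc_self)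

theorem lintegral_lintegral_uIcc (μ : Measure ℝ) [SFinite μ] {W : ℝ → ℝ≥0∞} (hW : Measurable W)
    (m : ℝ) :
    ∫⁻ x, (∫⁻ t in uIcc m x, W t) ∂μ = ∫⁻ t, W t * μ {x | t ∈ uIcc m x} := by
  set s : Set (ℝ × ℝ) := {q | q.2 ∈ uIcc m q.1}
  have hs : MeasurableSet s :=
    (measurableSet_le (measurable_const.min measurable_fst) measurable_snd).inter
      (measurableSet_le measurable_snd (measurable_const.max measurable_fst))
  let K : ℝ → ℝ → ℝ≥0∞ := fun x t => s.indicator (fun q => W q.2) (x, t)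
  have hK : Measurable (Function.uncurry K) := (hW.comp measurable_snd).indicator hs
  calc ∫⁻ x, (∫⁻ t in uIcc m x, W t) ∂μ = ∫⁻ x, (∫⁻ t, K x t) ∂μ := by
        simp_rw [← lintegral_indicator measurableSet_uIcc]; rfl
    _ = ∫⁻ t, ∫⁻ x, K x t ∂μ := lintegral_lintegral_swap hK.aemeasurable
    _ = ∫⁻ t, W t * μ {x | t ∈ uIcc m x} :=
        lintegral_congr fun t => lintegral_indicator_const (measurable_prodMk_right hs) (W t)

theorem abs_pow_sub_pow_le_two_mul {p : ℕ} (hp : Odd p) {c : ℝ} (hc : 0 ≤ c) (a : ℝ) :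
    |a| ^ p - a ^ p ≤ 2 * |a - c| ^ p := by
  rcases le_or_gt 0 a with ha | ha
  · rw [abs_of_nonneg ha, sub_self]
    positivity
  · have hle : |a| ^ p ≤ |a - c| ^ p := by
      refine pow_le_pow_left₀ (abs_nonneg a) ?_ p
      rw [abs_of_neg ha, abs_of_neg (by linarith)]
      linarith
    have hneg : a ^ p = -|a| ^ p := by
      rw [abs_of_neg ha, hp.neg_pow, neg_neg]
    linarith

section
variable {α : Type*} [MeasurableSpace α] {μ : Measure α}

theorem eLpNorm_natCast_pow {E : Type*} [NormedAddCommGroup E] (f : α → E) {p : ℕ} (hp : p ≠ 0) :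
    eLpNorm f p μ ^ p = ∫⁻ x, ‖f x‖ₑ ^ p ∂μ := by
  simpa [ENNReal.rpow_natCast] using
    eLpNorm_nnreal_pow_eq_lintegral (f := f) (μ := μ) (p := (p : NNReal)) (by exact_mod_cast hp)

theorem lintegral_enorm_pow_eq_ofReal_integral {f : α → ℝ} {p : ℕ} (hf : MemLp f p μ)
    (hp : p ≠ 0) : ∫⁻ x, ‖f x‖ₑ ^ p ∂μ = ENNReal.ofReal (∫ x, |f x| ^ p ∂μ) := by
  rw [ofReal_integral_eq_lintegral_ofReal (by simpa using hf.integrable_norm_pow hp)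
    (ae_of_all _ fun x => by positivity)]
  simp [Real.enorm_eq_ofReal_abs, ENNReal.ofReal_pow]

theorem lintegral_enorm_pow_mul_enorm_le {E F : Type*} [NormedAddCommGroup E]
    [NormedAddCommGroup F] {f : α → E} {g : α → F} (hf : AEStronglyMeasurable f μ)
    (hg : AEStronglyMeasurable g μ) {p : ℕ} (hp : p ≠ 0) :
    ∫⁻ x, ‖f x‖ₑ ^ (p - 1) * ‖g x‖ₑ ∂μ ≤ eLpNorm f p μ ^ (p - 1) * eLpNorm g p μ := by
  have hpR : (0 : ℝ) < p := by exact_mod_cast Nat.pos_of_ne_zero hp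
  have hexp : ∀ x : ℝ≥0∞, (x ^ p) ^ ((p - 1 : ℕ) / p : ℝ) = x ^ (p - 1) := fun x => by
    rw [← ENNReal.rpow_natCast, ← ENNReal.rpow_mul, mul_div_cancel₀ _ hpR.ne', ENNReal.rpow_natCast]
  have hsum : ((p - 1 : ℕ) / p : ℝ) + (p : ℝ)⁻¹ = 1 := by
    rw [Nat.cast_pred (Nat.pos_of_ne_zero hp)]
    field_simp
    ring
  have holder := ENNReal.lintegral_mul_norm_pow_le (μ := μ) (hf.enorm.pow_const p)
    (hg.enorm.pow_const p) (by positivity) (by positivity) hsum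
  simpa only [hexp, ENNReal.pow_rpow_inv_natCast hp, ← eLpNorm_natCast_pow _ hp] using holder

theorem integral_abs_pow_le_two_mul_integral_abs_sub_pow [IsFiniteMeasure μ] {p : ℕ}
    (hp : Odd p) {u : α → ℝ} (hu : MemLp u p μ) (hmoment : ∫ x, u x ^ p ∂μ = 0) (c : ℝ) :
    ∫ x, |u x| ^ p ∂μ ≤ 2 * ∫ x, |u x - c| ^ p ∂μ := by
  wlog hc : 0 ≤ c generalizing u c
  · simpa [abs_sub_comm, ← sub_eq_neg_add, hp.neg_pow] using
      this hu.neg (by simp [hp.neg_pow, integral_neg, hmoment]) (-c) (by linarith)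
  have hp0 : p ≠ 0 := hp.pos.ne'
  have habs : Integrable (fun x => |u x| ^ p) μ := by
    simpa using hu.integrable_norm_pow hp0
  have hsub : Integrable (fun x => |u x - c| ^ p) μ := by
    simpa using (hu.sub (memLp_const c)).integrable_norm_pow hp0
  have hpow : Integrable (fun x => u x ^ p) μ :=
    habs.mono' (hu.aestronglyMeasurable.pow p) (ae_of_all _ fun x => by simp)
  calc ∫ x, |u x| ^ p ∂μ = ∫ x, (|u x| ^ p - u x ^ p) ∂μ := by
        rw [integral_sub habs hpow, hmoment, sub_zero]
    _ ≤ ∫ x, 2 * |u x - c| ^ p ∂μ :=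
        integral_mono (habs.sub hpow) (hsub.const_mul 2) (abs_pow_sub_pow_le_two_mul hp hc <| u ·)
    _ = 2 * ∫ x, |u x - c| ^ p ∂μ := integral_const_mul 2 _

theorem eLpNorm_le_two_mul_eLpNorm_sub [IsFiniteMeasure μ] {p : ℕ} (hp : Odd p) {u : α → ℝ}
    (hu : MemLp u p μ) (hmoment : ∫ x, u x ^ p ∂μ = 0) (c : ℝ) :
    eLpNorm u p μ ≤ 2 * eLpNorm (fun x => u x - c) p μ := by
  have hp0 : p ≠ 0 := hp.pos.ne'
  have hsub : MemLp (fun x => u x - c) p μ := hu.sub (memLp_const c)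
  rw [← ENNReal.pow_le_pow_left_iff hp0, mul_pow, eLpNorm_natCast_pow _ hp0,
    eLpNorm_natCast_pow _ hp0, lintegral_enorm_pow_eq_ofReal_integral hu hp0,
    lintegral_enorm_pow_eq_ofReal_integral hsub hp0]
  calc ENNReal.ofReal (∫ x, |u x| ^ p ∂μ)
      ≤ ENNReal.ofReal (2 * ∫ x, |u x - c| ^ p ∂μ) := by
        gcongr
        exact integral_abs_pow_le_two_mul_integral_abs_sub_pow hp hu hmoment c
    _ = 2 * ENNReal.ofReal (∫ x, |u x - c| ^ p ∂μ) := by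
        rw [ENNReal.ofReal_mul zero_le_two, ENNReal.ofReal_ofNat]
    _ ≤ 2 ^ p * ENNReal.ofReal (∫ x, |u x - c| ^ p ∂μ) := by
        gcongr
        exact le_self_pow₀ one_le_two hp0

end

theorem exists_measure_Iic_eq_half (μ : Measure ℝ) [IsProbabilityMeasure μ]
    [NullSingletonClass μ] : ∃ m, μ (Iic m) = 2⁻¹ := by
  set F := ProbabilityTheory.cdf μ
  have hcont : Continuous F := continuous_iff_continuousAt.2 fun x => by
    rw [F.mono.continuousAt_iff_leftLim_eq_rightLim, F.rightLim_eq]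
    have hx := F.measure_singleton x
    rw [ProbabilityTheory.measure_cdf, measure_singleton, eq_comm, ofReal_eq_zero] at hx
    linarith [F.mono.leftLim_le (le_refl x)]
  obtain ⟨m, hm⟩ : (2⁻¹ : ℝ) ∈ range F :=
    mem_range_of_exists_le_of_exists_ge hcont
      ((ProbabilityTheory.tendsto_cdf_atBot μ).eventually (eventually_le_nhds (by norm_num))).exists
      ((ProbabilityTheory.tendsto_cdf_atTop μ).eventually (eventually_ge_nhds (by norm_num))).exists
  exact ⟨m, by rw [← ProbabilityTheory.ofReal_cdf, hm, ofReal_inv_of_pos two_pos, ofReal_ofNat]⟩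

theorem measure_setOf_mem_uIcc_le_min (μ : Measure ℝ) [IsProbabilityMeasure μ]
    [NullSingletonClass μ] {m t : ℝ} (hm : μ (Iic m) = 2⁻¹) (ht : t ≠ m) :
    μ {x | t ∈ uIcc m x} ≤ min (μ (Iic t)) (μ (Ioi t)) := by
  have hm' : μ (Ioi m) = 2⁻¹ := by
    rw [← compl_Iic, prob_compl_eq_one_sub measurableSet_Iic, hm, ENNReal.one_sub_inv_two]
  rcases ht.lt_or_gt with htm | hmt
  · have hset : {x | t ∈ uIcc m x} = Iic t := by
      ext x
      simp only [mem_ofPred_eq, mem_uIcc, mem_Iic]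
      constructor
      · rintro (⟨h, -⟩ | ⟨h, -⟩) <;> linarith
      · intro hx; exact Or.inr ⟨hx, htm.le⟩
    have hle : μ (Iic t) ≤ 2⁻¹ := hm ▸ measure_mono (Iic_subset_Iic.2 htm.le)
    have hge : 2⁻¹ ≤ μ (Ioi t) := hm' ▸ measure_mono (Ioi_subset_Ioi htm.le)
    rw [hset, min_eq_left (hle.trans hge)]
  · have hset : {x | t ∈ uIcc m x} = Ici t := by
      ext x
      simp only [mem_ofPred_eq, mem_uIcc, mem_Ici]
      constructor
      · rintro (⟨-, h⟩ | ⟨-, h⟩) <;> linarith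
      · intro hx; exact Or.inl ⟨hmt.le, hx⟩
    have hle : μ (Ioi t) ≤ 2⁻¹ := hm' ▸ measure_mono (Ioi_subset_Ioi hmt.le)
    have hge : 2⁻¹ ≤ μ (Iic t) := hm ▸ measure_mono (Iic_subset_Iic.2 hmt.le)
    rw [hset, measure_congr Ioi_ae_eq_Ici.symm, min_eq_right (hle.trans hge)]

theorem mul_lintegral_enorm_le_of_isoperimetric (μ : Measure ℝ) [IsProbabilityMeasure μ]
    [NullSingletonClass μ] {c : ℝ≥0∞}
    (hiso : volume.withDensity (fun t => c * min (μ (Iic t)) (μ (Ioi t))) ≤ μ)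
    {m : ℝ} (hm : μ (Iic m) = 2⁻¹) {φ φ' : ℝ → ℝ} (hφ : ∀ x, HasDerivAt φ (φ' x) x)
    (hφm : φ m = 0) :
    c * ∫⁻ x, ‖φ x‖ₑ ∂μ ≤ ∫⁻ x, ‖φ' x‖ₑ ∂μ := by
  have hφ' : Measurable fun t => ‖φ' t‖ₑ := (measurable_of_hasDerivAt hφ).enorm
  have hmin : Measurable fun t => min (μ (Iic t)) (μ (Ioi t)) :=
    (Monotone.measurable fun _ _ h => measure_mono (Iic_subset_Iic.2 h)).min
      (Antitone.measurable fun _ _ h => measure_mono (Ioi_subset_Ioi h))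
  calc c * ∫⁻ x, ‖φ x‖ₑ ∂μ ≤ c * ∫⁻ x, (∫⁻ t in uIcc m x, ‖φ' t‖ₑ) ∂μ := by
        gcongr with x
        simpa [hφm] using enorm_sub_le_lintegral_uIcc hφ m x
    _ = c * ∫⁻ t, ‖φ' t‖ₑ * μ {x | t ∈ uIcc m x} := by
        rw [lintegral_lintegral_uIcc μ hφ' m]
    _ ≤ c * ∫⁻ t, ‖φ' t‖ₑ * min (μ (Iic t)) (μ (Ioi t)) := by
        gcongr 1
        have hne : ∀ᵐ t, t ≠ m := measure_eq_zero_iff_ae_notMem.1 (measure_singleton m)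
        refine lintegral_mono_ae (hne.mono fun t ht => ?_)
        gcongr
        exact measure_setOf_mem_uIcc_le_min μ hm ht
    _ = ∫⁻ t, ‖φ' t‖ₑ ∂volume.withDensity (fun t => c * min (μ (Iic t)) (μ (Ioi t))) := by
        rw [lintegral_withDensity_eq_lintegral_mul _ (hmin.const_mul c) hφ',
          ← lintegral_const_mul c (by exact hφ'.mul hmin)]
        exact lintegral_congr fun t => by simp only [Pi.mul_apply]; ring
    _ ≤ ∫⁻ x, ‖φ' x‖ₑ ∂μ := lintegral_mono' hiso le_rfl

theorem mul_eLpNorm_sub_le_of_isoperimetric (μ : Measure ℝ) [IsProbabilityMeasure μ]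
    [NullSingletonClass μ] {c : ℝ≥0∞}
    (hiso : volume.withDensity (fun t => c * min (μ (Iic t)) (μ (Ioi t))) ≤ μ)
    {m : ℝ} (hm : μ (Iic m) = 2⁻¹) {u u' : ℝ → ℝ} (hu : ∀ x, HasDerivAt u (u' x) x)
    {p : ℕ} (hp : p ≠ 0) (hum : MemLp (fun x => u x - u m) p μ) :
    c * eLpNorm (fun x => u x - u m) p μ ≤ p * eLpNorm u' p μ := by
  set A := eLpNorm (fun x => u x - u m) p μ
  set B := eLpNorm u' p μ
  have hφ : ∀ x, HasDerivAt (fun x => (u x - u m) ^ p) (p * (u x - u m) ^ (p - 1) * u' x) x :=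
    fun x => ((hu x).sub_const (u m)).pow p
  have hL1 := mul_lintegral_enorm_le_of_isoperimetric μ hiso hm hφ (by simp [zero_pow hp])
  simp only [enorm_mul, enorm_pow, Real.enorm_natCast] at hL1
  have hpow : c * A ^ p ≤ A ^ (p - 1) * (p * B) := by
    calc c * A ^ p = c * ∫⁻ x, ‖u x - u m‖ₑ ^ p ∂μ := by rw [eLpNorm_natCast_pow _ hp]
      _ ≤ ∫⁻ x, p * ‖u x - u m‖ₑ ^ (p - 1) * ‖u' x‖ₑ ∂μ := hL1
      _ = p * ∫⁻ x, ‖u x - u m‖ₑ ^ (p - 1) * ‖u' x‖ₑ ∂μ := by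
        simp_rw [mul_assoc]
        exact lintegral_const_mul' _ _ (natCast_ne_top p)
      _ ≤ p * (A ^ (p - 1) * B) := by
        gcongr
        exact lintegral_enorm_pow_mul_enorm_le hum.aestronglyMeasurable
          (measurable_of_hasDerivAt hu).aestronglyMeasurable hp
      _ = A ^ (p - 1) * (p * B) := by ring
  rcases eq_or_ne A 0 with hA | hA
  · simp [hA]
  rw [← pow_sub_one_mul hp, mul_left_comm] at hpow
  exact (ENNReal.mul_le_mul_iff_right (pow_ne_zero _ hA) (pow_ne_top hum.eLpNorm_ne_top)).1 hpow

theorem ofReal_min_cdf_one_sub_cdf (μ : Measure ℝ) [IsProbabilityMeasure μ] (t : ℝ) :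
    ENNReal.ofReal (min (cdf μ t) (1 - cdf μ t)) = min (μ (Iic t)) (μ (Ioi t)) := by
  rw [← compl_Iic, ← ofReal_measureReal, ← ofReal_measureReal,
    probReal_compl_eq_one_sub measurableSet_Iic, ofReal_min]
  rfl

theorem ae_ofReal_isopConst_mul_min_le {f : ℝ → ℝ} (hf : ∀ x, 0 ≤ f x) (μ : Measure ℝ)
    [IsProbabilityMeasure μ] :
    ∀ᵐ t, ENNReal.ofReal (isopConst μ f) * min (μ (Iic t)) (μ (Ioi t)) ≤ ENNReal.ofReal (f t) := by
  set M : ℝ → ℝ := fun t => min (cdf μ t) (1 - cdf μ t)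
  set S : Set ℝ := {t | 0 < cdf μ t ∧ cdf μ t < 1}
  have hcdf : Measurable (cdf μ) := Monotone.measurable fun _ _ h =>
    ENNReal.toReal_mono (measure_ne_top μ _) (measure_mono (Iic_subset_Iic.2 h))
  have hS : MeasurableSet S :=
    (measurableSet_lt measurable_const hcdf).inter (measurableSet_lt hcdf measurable_const)
  have hM : ∀ t, 0 ≤ M t := fun t =>
    le_min ENNReal.toReal_nonneg (sub_nonneg.2 measureReal_le_one)
  have hbdd : IsBoundedUnder (· ≥ ·) (ae (volume.restrict S)) fun t => f t / M t :=
    ⟨0, eventually_map.2 (ae_of_all _ fun t => div_nonneg (hf t) (hM t))⟩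
  filter_upwards [(ae_restrict_iff' hS).1 (ae_essInf_le hbdd)] with t ht
  rw [← ofReal_min_cdf_one_sub_cdf, ← ENNReal.ofReal_mul' (hM t)]
  refine ENNReal.ofReal_le_ofReal ?_
  by_cases htS : t ∈ S
  · exact (le_div_iff₀ (lt_min htS.1 (sub_pos.2 htS.2))).1 (ht htS)
  · have hM0 : M t = 0 := by
      refine le_antisymm ?_ (hM t)
      rcases not_and_or.1 htS with h | h
      · exact (min_le_left _ _).trans (not_lt.1 h)
      · exact (min_le_right _ _).trans (sub_nonpos.2 (not_lt.1 h))
    rw [hM0, mul_zero]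
    exact hf t

theorem Lp_poincare_odd_general (f : ℝ → ℝ) (hfpos : ∀ x, 0 < f x)
    (μ : Measure ℝ) (hμ : μ = volume.withDensity fun x => ENNReal.ofReal (f x))
    [IsProbabilityMeasure μ]
    (hIs : 0 < isopConst μ f)
    (p : ℕ) (hodd : Odd p)
    (u u' : ℝ → ℝ) (hud : ∀ x, HasDerivAt u (u' x) x)
    (hu : MemLp u (p : ℝ≥0∞) μ)
    (hmoment : ∫ x, (u x) ^ p ∂μ = 0) :
    eLpNorm u (p : ℝ≥0∞) μ
      ≤ ENNReal.ofReal (2 * (p : ℝ) * (isopConst μ f)⁻¹) * eLpNorm u' (p : ℝ≥0∞) μ := by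
  have : NullSingletonClass μ := hμ ▸ inferInstance
  obtain ⟨m, hm⟩ := exists_measure_Iic_eq_half μ
  have hiso : volume.withDensity
      (fun t => ENNReal.ofReal (isopConst μ f) * min (μ (Iic t)) (μ (Ioi t))) ≤ μ :=
    (withDensity_mono (ae_ofReal_isopConst_mul_min_le (fun x => (hfpos x).le) μ)).trans_eq hμ.symm
  have hpoinc := mul_eLpNorm_sub_le_of_isoperimetric μ hiso hm hud hodd.pos.ne'
    (hu.sub (memLp_const (u m)))
  have hinv : ENNReal.ofReal (isopConst μ f)⁻¹ * ENNReal.ofReal (isopConst μ f) = 1 := by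
    rw [← ofReal_mul (inv_nonneg.2 hIs.le), inv_mul_cancel₀ hIs.ne', ofReal_one]
  calc eLpNorm u p μ ≤ 2 * eLpNorm (fun x => u x - u m) p μ :=
        eLpNorm_le_two_mul_eLpNorm_sub hodd hu hmoment (u m)
    _ = 2 * ENNReal.ofReal (isopConst μ f)⁻¹ *
          (ENNReal.ofReal (isopConst μ f) * eLpNorm (fun x => u x - u m) p μ) := by
        rw [mul_assoc 2, ← mul_assoc (ENNReal.ofReal _), hinv, one_mul]
    _ ≤ 2 * ENNReal.ofReal (isopConst μ f)⁻¹ * (p * eLpNorm u' p μ) := by gcongr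
    _ = ENNReal.ofReal (2 * p * (isopConst μ f)⁻¹) * eLpNorm u' p μ := by
        rw [ofReal_mul (by positivity), ofReal_mul zero_le_two, ofReal_ofNat, ofReal_natCast]
        ring

/-- `L_p`-Poincaré inequality for odd `p` and `E[u^p] = 0`: for a probability measure
`μ` on `ℝ` with positive density and finite (positive) isoperimetric constant, `p` an
odd integer `≥ 3`, `u ∈ L_p(μ)` absolutely continuous with `E[u^p] = 0`:
`‖u‖_p ≤ 2p · Is(μ)⁻¹ · ‖u'‖_p`. -/
theorem Lp_poincare_odd (f : ℝ → ℝ) (hfpos : ∀ x, 0 < f x)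
    (μ : Measure ℝ) (hμ : μ = volume.withDensity fun x => ENNReal.ofReal (f x))
    [IsProbabilityMeasure μ]
    (hIs : 0 < isopConst μ f)
    (p : ℕ) (hodd : Odd p) (hp3 : 3 ≤ p)
    (u u' : ℝ → ℝ) (hud : ∀ x, HasDerivAt u (u' x) x)
    (hu : MemLp u (p : ℝ≥0∞) μ)
    (hmoment : ∫ x, (u x) ^ p ∂μ = 0) :
    eLpNorm u (p : ℝ≥0∞) μ
      ≤ ENNReal.ofReal (2 * (p : ℝ) * (isopConst μ f)⁻¹) * eLpNorm u' (p : ℝ≥0∞) μ :=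
  Lp_poincare_odd_general f hfpos μ hμ hIs p hodd u u' hud hu hmoment
end

section
/- Suppose a probability measure μ on ℝ satisfies: for all absolutely continuous g ∈ L_p(μ), h ∈ L_q(μ) with 1/p + 1/q = 1, |Cov_μ(g,h)| ≤ c_p ‖g'‖_p ‖h − E[h]‖_q, for some constant c_p > 0. Then if X has law μ, ‖X − E[X]‖_p ≤ 2 c_p. -/
/-!
Test the covariance inequality with `g x = x` (so `g' = 1`) and `h x = ψ (x - m)`, where
`m = E X` and `ψ t = t |t|^(p-2)`. Then `Cov(g, h) = E |X - m|^p`, while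
`‖h - E h‖_q ≤ 2 ‖h‖_q = 2 (E |X - m|^p)^(1/q)` because `(p - 1) q = p`. Hence
`E |X - m|^p ≤ 2 c (E |X - m|^p)^(1/q)`, which is `‖X - m‖_p ≤ 2 c` since `1/p + 1/q = 1`.
For `p < 2` the function `ψ` is not differentiable at `0`, so one tests with
`ψ_ε t = t (t² + ε)^((p-2)/2)` instead and lets `ε → 0⁺` by dominated convergence, all the
relevant integrands being bounded by `(|X - m| + 1)^p` for `ε ≤ 1`.
-/

open MeasureTheory Set ENNReal Filter Topology

noncomputable def smoothSignedPow (p ε t : ℝ) : ℝ := t * (t ^ 2 + ε) ^ ((p - 2) / 2)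

section SmoothSignedPow

variable {p q ε : ℝ}

lemma differentiable_smoothSignedPow (hε : 0 < ε) : Differentiable ℝ (smoothSignedPow p ε) :=
  differentiable_id.mul <| Differentiable.rpow_const (by fun_prop) fun t => Or.inl (by positivity)

lemma continuousAt_smoothSignedPow_zero (p t : ℝ) :
    ContinuousAt (fun ε => smoothSignedPow p ε t) 0 := by
  rcases eq_or_ne t 0 with rfl | ht
  · simpa [smoothSignedPow] using continuousAt_const
  · exact continuousAt_const.mul <|
      (continuousAt_const.add continuousAt_id).rpow_const (Or.inl (by simpa using ht))

lemma abs_smoothSignedPow_zero (hp : 1 < p) (t : ℝ) : |smoothSignedPow p 0 t| = |t| ^ (p - 1) := by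
  have hsq : (t ^ 2 + 0) ^ ((p - 2) / 2) = |t| ^ (p - 2) := by
    rw [add_zero, ← sq_abs, ← Real.rpow_natCast, ← Real.rpow_mul (abs_nonneg t)]
    ring_nf
  rw [smoothSignedPow, hsq, abs_mul, abs_of_nonneg (Real.rpow_nonneg (abs_nonneg t) _),
    ← Real.rpow_one_add' (abs_nonneg t) (by linarith)]
  ring_nf

lemma mul_smoothSignedPow_zero (hp : 1 < p) (t : ℝ) : t * smoothSignedPow p 0 t = |t| ^ p := by
  have hnonneg : 0 ≤ t * smoothSignedPow p 0 t := by
    rw [smoothSignedPow, ← mul_assoc]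
    exact mul_nonneg (mul_self_nonneg t) (Real.rpow_nonneg (by positivity) _)
  rw [← abs_of_nonneg hnonneg, abs_mul, abs_smoothSignedPow_zero hp,
    ← Real.rpow_one_add' (abs_nonneg t) (by linarith)]
  ring_nf

lemma abs_smoothSignedPow_le (hp : 1 ≤ p) (hε : 0 < ε) (hε1 : ε ≤ 1) (t : ℝ) :
    |smoothSignedPow p ε t| ≤ (|t| + 1) ^ (p - 1) := by
  have hpos : 0 < t ^ 2 + ε := by positivity
  have habs : |t| ≤ (t ^ 2 + ε) ^ (1 / 2 : ℝ) := by
    rw [← Real.sqrt_eq_rpow, ← Real.sqrt_sq_eq_abs]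
    exact Real.sqrt_le_sqrt (by linarith)
  calc |smoothSignedPow p ε t| = |t| * (t ^ 2 + ε) ^ ((p - 2) / 2) := by
        rw [smoothSignedPow, abs_mul, abs_of_nonneg (Real.rpow_nonneg hpos.le _)]
    _ ≤ (t ^ 2 + ε) ^ (1 / 2 : ℝ) * (t ^ 2 + ε) ^ ((p - 2) / 2) := by gcongr
    _ = (t ^ 2 + ε) ^ ((p - 1) / 2) := by rw [← Real.rpow_add hpos]; ring_nf
    _ ≤ ((|t| + 1) ^ 2) ^ ((p - 1) / 2) :=
        Real.rpow_le_rpow hpos.le (by nlinarith [sq_abs t, abs_nonneg t]) (by linarith)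
    _ = (|t| + 1) ^ (p - 1) := by
        rw [← Real.rpow_natCast, ← Real.rpow_mul (by positivity)]
        ring_nf

lemma abs_mul_smoothSignedPow_le (hp : 1 ≤ p) (hε : 0 < ε) (hε1 : ε ≤ 1) (t : ℝ) :
    |t * smoothSignedPow p ε t| ≤ (|t| + 1) ^ p := by
  calc |t * smoothSignedPow p ε t| ≤ (|t| + 1) * (|t| + 1) ^ (p - 1) := by
        rw [abs_mul]
        gcongr
        · linarith
        · exact abs_smoothSignedPow_le hp hε hε1 t
    _ = (|t| + 1) ^ p := by
        rw [← Real.rpow_one_add' (by positivity) (by linarith)]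
        ring_nf

lemma abs_smoothSignedPow_rpow_le (hpq : p.HolderConjugate q) (hε : 0 < ε) (hε1 : ε ≤ 1)
    (t : ℝ) : |smoothSignedPow p ε t| ^ q ≤ (|t| + 1) ^ p := by
  calc |smoothSignedPow p ε t| ^ q ≤ ((|t| + 1) ^ (p - 1)) ^ q := by
        gcongr
        · exact hpq.symm.nonneg
        · exact abs_smoothSignedPow_le hpq.lt.le hε hε1 t
    _ = (|t| + 1) ^ p := by rw [← Real.rpow_mul (by positivity), hpq.sub_one_mul_conj]

end SmoothSignedPow

section Integrals

variable {Ω : Type*} [MeasurableSpace Ω] {μ : Measure Ω} [IsFiniteMeasure μ] {p q : ℝ}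
  {f : Ω → ℝ}

lemma integrable_abs_add_one_rpow (hp : 0 < p) (hf : MemLp f (ENNReal.ofReal p) μ) :
    Integrable (fun x => (|f x| + 1) ^ p) μ := by
  have h := (hf.norm.add (memLp_const 1)).integrable_norm_rpow (by simpa using hp) ofReal_ne_top
  simp only [ENNReal.toReal_ofReal hp.le] at h
  refine h.congr (ae_of_all _ fun x => ?_)
  simp only [Pi.add_apply, Real.norm_eq_abs]
  rw [abs_of_nonneg (by positivity)]

lemma memLp_smoothSignedPow_comp (hpq : p.HolderConjugate q) (hf : MemLp f (ENNReal.ofReal p) μ)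
    {ε : ℝ} (hε : 0 < ε) (hε1 : ε ≤ 1) :
    MemLp (fun x => smoothSignedPow p ε (f x)) (ENNReal.ofReal q) μ := by
  have hmeas : AEStronglyMeasurable (fun x => smoothSignedPow p ε (f x)) μ :=
    (differentiable_smoothSignedPow hε).continuous.comp_aestronglyMeasurable hf.1
  refine (integrable_norm_rpow_iff hmeas (by simpa using hpq.symm.pos) ofReal_ne_top).mp ?_
  rw [ENNReal.toReal_ofReal hpq.symm.nonneg]
  refine (integrable_abs_add_one_rpow hpq.pos hf).mono' ?_ (ae_of_all _ fun x => ?_)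
  · exact (hmeas.norm.aemeasurable.pow_const _).aestronglyMeasurable
  · rw [Real.norm_of_nonneg (by positivity), Real.norm_eq_abs]
    exact abs_smoothSignedPow_rpow_le hpq hε hε1 (f x)

lemma tendsto_integral_mul_smoothSignedPow (hp : 1 < p) (hf : MemLp f (ENNReal.ofReal p) μ) :
    Tendsto (fun ε => ∫ x, f x * smoothSignedPow p ε (f x) ∂μ) (𝓝[>] 0)
      (𝓝 (∫ x, |f x| ^ p ∂μ)) := by
  have hε : ∀ᶠ ε in 𝓝[>] (0 : ℝ), ε ∈ Ioc 0 1 := Ioc_mem_nhdsGT zero_lt_one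
  refine tendsto_integral_filter_of_dominated_convergence _ ?_ ?_
    (integrable_abs_add_one_rpow (zero_lt_one.trans hp) hf) (ae_of_all _ fun x => ?_)
  · filter_upwards [hε] with ε hε
    exact hf.1.mul <|
      (differentiable_smoothSignedPow hε.1).continuous.comp_aestronglyMeasurable hf.1
  · filter_upwards [hε] with ε hε
    exact ae_of_all _ fun x => abs_mul_smoothSignedPow_le hp.le hε.1 hε.2 (f x)
  · rw [← mul_smoothSignedPow_zero hp]
    exact ((continuousAt_smoothSignedPow_zero p (f x)).tendsto.mono_left
      nhdsWithin_le_nhds).const_mul (f x)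

lemma tendsto_integral_abs_smoothSignedPow_rpow (hpq : p.HolderConjugate q)
    (hf : MemLp f (ENNReal.ofReal p) μ) :
    Tendsto (fun ε => ∫ x, |smoothSignedPow p ε (f x)| ^ q ∂μ) (𝓝[>] 0)
      (𝓝 (∫ x, |f x| ^ p ∂μ)) := by
  have hε : ∀ᶠ ε in 𝓝[>] (0 : ℝ), ε ∈ Ioc 0 1 := Ioc_mem_nhdsGT zero_lt_one
  refine tendsto_integral_filter_of_dominated_convergence _ ?_ ?_
    (integrable_abs_add_one_rpow hpq.pos hf) (ae_of_all _ fun x => ?_)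
  · filter_upwards [hε] with ε hε
    exact ((differentiable_smoothSignedPow hε.1).continuous.abs.rpow_const
      fun _ => Or.inr hpq.symm.nonneg).comp_aestronglyMeasurable hf.1
  · filter_upwards [hε] with ε hε
    refine ae_of_all _ fun x => ?_
    rw [Real.norm_of_nonneg (by positivity)]
    exact abs_smoothSignedPow_rpow_le hpq hε.1 hε.2 (f x)
  · have hlim : |smoothSignedPow p 0 (f x)| ^ q = |f x| ^ p := by
      rw [abs_smoothSignedPow_zero hpq.lt, ← Real.rpow_mul (abs_nonneg _), hpq.sub_one_mul_conj]
    rw [← hlim]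
    exact (((continuousAt_smoothSignedPow_zero p (f x)).abs.rpow_const
      (Or.inr hpq.symm.nonneg)).tendsto.mono_left nhdsWithin_le_nhds)

end Integrals

section Centering

variable {Ω : Type*} [MeasurableSpace Ω] {μ : Measure Ω}

lemma eLpNorm_sub_integral_le [IsProbabilityMeasure μ] {E : Type*} [NormedAddCommGroup E]
    [NormedSpace ℝ E] {r : ℝ≥0∞} (hr : 1 ≤ r) {h : Ω → E} (hh : AEStronglyMeasurable h μ) :
    eLpNorm (fun x => h x - ∫ y, h y ∂μ) r μ ≤ 2 * eLpNorm h r μ := by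
  have hmean : ‖∫ y, h y ∂μ‖ₑ ≤ eLpNorm h r μ :=
    calc ‖∫ y, h y ∂μ‖ₑ ≤ eLpNorm h 1 μ := by
          rw [eLpNorm_one_eq_lintegral_enorm]; exact enorm_integral_le_lintegral_enorm h
      _ ≤ eLpNorm h r μ := eLpNorm_le_eLpNorm_of_exponent_le hr hh
  calc eLpNorm (fun x => h x - ∫ y, h y ∂μ) r μ
      ≤ eLpNorm h r μ + eLpNorm (fun _ => ∫ y, h y ∂μ) r μ :=
        eLpNorm_sub_le hh aestronglyMeasurable_const hr
    _ ≤ eLpNorm h r μ + eLpNorm h r μ := by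
        rw [eLpNorm_const _ (zero_lt_one.trans_le hr).ne' (IsProbabilityMeasure.ne_zero μ)]
        simpa using add_le_add_right hmean _
    _ = 2 * eLpNorm h r μ := (two_mul _).symm

lemma integral_mul_sub_integral {X h : Ω → ℝ} (hX : Integrable X μ) (hh : Integrable h μ)
    (hXh : Integrable (fun x => X x * h x) μ) :
    ∫ x, X x * (h x - ∫ y, h y ∂μ) ∂μ = ∫ x, (X x - ∫ y, X y ∂μ) * h x ∂μ := by
  simp only [mul_sub, sub_mul]
  rw [integral_sub hXh (hX.mul_const _), integral_sub hXh (hh.const_mul _),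
    integral_mul_const, integral_const_mul, mul_comm]

end Centering

def SatisfiesCovarianceInequality (μ : Measure ℝ) (p q c : ℝ) : Prop :=
  ∀ g h g' h' : ℝ → ℝ, (∀ x, HasDerivAt g (g' x) x) → (∀ x, HasDerivAt h (h' x) x) →
    MemLp g (ENNReal.ofReal p) μ → MemLp h (ENNReal.ofReal q) μ →
    ENNReal.ofReal |∫ x, g x * (h x - ∫ y, h y ∂μ) ∂μ|
      ≤ ENNReal.ofReal c * eLpNorm g' (ENNReal.ofReal p) μ *
          eLpNorm (fun x => h x - ∫ y, h y ∂μ) (ENNReal.ofReal q) μ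

lemma SatisfiesCovarianceInequality.integral_sub_mul_le {μ : Measure ℝ} [IsProbabilityMeasure μ]
    {p q c : ℝ} (hcov : SatisfiesCovarianceInequality μ p q c) (hpq : p.HolderConjugate q)
    (hc : 0 ≤ c) (hX : MemLp (fun x : ℝ => x) (ENNReal.ofReal p) μ) {h : ℝ → ℝ}
    (hd : Differentiable ℝ h) (hh : MemLp h (ENNReal.ofReal q) μ) :
    ∫ x, (x - ∫ y, y ∂μ) * h x ∂μ ≤ 2 * c * (∫ x, |h x| ^ q ∂μ) ^ q⁻¹ := by
  have hPQ := hpq.ennrealOfReal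
  have hq1 : 1 ≤ ENNReal.ofReal q := by simpa using hpq.symm.lt.le
  have hcov' := hcov (fun x => x) h (fun _ => 1) (deriv h) (fun x => hasDerivAt_id x)
    (fun x => (hd x).hasDerivAt) hX hh
  rw [integral_mul_sub_integral (hX.integrable (by simpa using hpq.lt.le))
    (hh.integrable hq1) (hX.integrable_mul hh),
    eLpNorm_const _ (by simpa using hpq.pos) (IsProbabilityMeasure.ne_zero μ)] at hcov'
  have hnorm : eLpNorm h (ENNReal.ofReal q) μ = ENNReal.ofReal ((∫ x, |h x| ^ q ∂μ) ^ q⁻¹) := by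
    simp [hh.eLpNorm_eq_integral_rpow_norm (by simpa using hpq.symm.pos) ofReal_ne_top,
      ENNReal.toReal_ofReal hpq.symm.nonneg]
  refine (le_abs_self _).trans <| (ENNReal.ofReal_le_ofReal_iff (by positivity)).mp ?_
  calc ENNReal.ofReal |∫ x, (x - ∫ y, y ∂μ) * h x ∂μ|
      ≤ ENNReal.ofReal c * (2 * eLpNorm h (ENNReal.ofReal q) μ) := by
        have hcentered := eLpNorm_sub_integral_le hq1 hh.1 (μ := μ)
        simp only [enorm_one, measure_univ, one_rpow, mul_one] at hcov'
        exact hcov'.trans (by gcongr)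
    _ = ENNReal.ofReal (2 * c * (∫ x, |h x| ^ q ∂μ) ^ q⁻¹) := by
        rw [hnorm, ENNReal.ofReal_mul (by positivity), ENNReal.ofReal_mul zero_le_two,
          ENNReal.ofReal_ofNat]
        ring

lemma Real.HolderConjugate.rpow_inv_le_of_le_mul_rpow_inv {p q A C : ℝ}
    (hpq : p.HolderConjugate q) (hA : 0 ≤ A) (hC : 0 ≤ C) (h : A ≤ C * A ^ q⁻¹) :
    A ^ p⁻¹ ≤ C := by
  rcases hA.eq_or_lt with rfl | hA
  · rwa [Real.zero_rpow (inv_ne_zero hpq.ne_zero)]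
  · refine le_of_mul_le_mul_right ?_ (Real.rpow_pos_of_pos hA q⁻¹)
    rwa [← Real.rpow_add hA, hpq.inv_add_inv_eq_one, Real.rpow_one]

/-- Moment bound from a `(p,q)` covariance inequality: if a probability measure `μ`
on `ℝ` satisfies `|Cov(g,h)| ≤ c_p ‖g'‖_p ‖h − E h‖_q` for all absolutely continuous
`g ∈ L_p(μ)`, `h ∈ L_q(μ)` (with `1/p + 1/q = 1`), then a random variable `X` with
law `μ` satisfies `‖X − E X‖_p ≤ 2 c_p`. -/
theorem moment_bound_from_cov (μ : Measure ℝ) [IsProbabilityMeasure μ]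
    (p q : ℝ) (hp : 1 ≤ p) (hq : 1 ≤ q) (hpq : 1 / p + 1 / q = 1)
    (c : ℝ) (hc : 0 < c)
    (hcov : ∀ g h g' h' : ℝ → ℝ, (∀ x, HasDerivAt g (g' x) x) →
      (∀ x, HasDerivAt h (h' x) x) →
      MemLp g (ENNReal.ofReal p) μ → MemLp h (ENNReal.ofReal q) μ →
      ENNReal.ofReal |∫ x, g x * (h x - ∫ y, h y ∂μ) ∂μ|
        ≤ ENNReal.ofReal c * eLpNorm g' (ENNReal.ofReal p) μ *
            eLpNorm (fun x => h x - ∫ y, h y ∂μ) (ENNReal.ofReal q) μ)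
    (hX : MemLp (fun x : ℝ => x) (ENNReal.ofReal p) μ) :
    eLpNorm (fun x : ℝ => x - ∫ y, y ∂μ) (ENNReal.ofReal p) μ
      ≤ ENNReal.ofReal (2 * c) := by
  have hconj : p.HolderConjugate q := by
    simpa using Real.holderConjugate_one_div (one_div_pos.mpr (by linarith))
      (one_div_pos.mpr (by linarith)) hpq
  set f := fun x : ℝ => x - ∫ y, y ∂μ
  have hf : MemLp f (ENNReal.ofReal p) μ := hX.sub (memLp_const _)
  have hbound : ∀ᶠ ε in 𝓝[>] (0 : ℝ), ∫ x, f x * smoothSignedPow p ε (f x) ∂μ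
      ≤ 2 * c * (∫ x, |smoothSignedPow p ε (f x)| ^ q ∂μ) ^ q⁻¹ := by
    filter_upwards [Ioc_mem_nhdsGT zero_lt_one] with ε hε
    exact SatisfiesCovarianceInequality.integral_sub_mul_le hcov hconj hc.le hX
      ((differentiable_smoothSignedPow hε.1).comp (differentiable_id.sub_const _))
      (memLp_smoothSignedPow_comp hconj hf hε.1 hε.2)
  have hmoment := le_of_tendsto_of_tendsto (tendsto_integral_mul_smoothSignedPow hconj.lt hf)
    (((tendsto_integral_abs_smoothSignedPow_rpow hconj hf).rpow_const
      (Or.inr (inv_nonneg.mpr hconj.symm.nonneg))).const_mul (2 * c)) hbound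
  rw [hf.eLpNorm_eq_integral_rpow_norm (by simpa using hconj.pos) ofReal_ne_top,
    ENNReal.toReal_ofReal hconj.nonneg]
  exact ENNReal.ofReal_le_ofReal <| by
    simpa using hconj.rpow_inv_le_of_le_mul_rpow_inv (by positivity) (by positivity) hmoment
end
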